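/- Assume V satisfies (V1) and let ε₀ ∈ (0, 2s*−2). Then limsup_{ε→ε₀} S^V_{2s*−ε} ≤ S^V_{2s*−ε₀}. -/

import Mathlib

open MeasureTheory Real Filter Set

noncomputable section

/-- Euclidean space ℝ^N. -/
abbrev Euc (N : ℕ) := EuclideanSpace ℝ (Fin N)

/-- The critical exponent 2s* = 2N/(N-2s). -/
def twoStar (N : ℕ) (s : ℝ) : ℝ := 2 * N / (N - 2 * s)

/-- Normalizing constant c(N,s). -/
def cNs (N : ℕ) (s : ℝ) : ℝ :=
  4 ^ s * s * Real.Gamma ((N + 2 * s) / 2) / (Real.pi ^ ((N : ℝ) / 2) * Real.Gamma (1 - s))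

/-- Bilinear fractional Dirichlet energy E(u,v). -/
def bilinE (N : ℕ) (s : ℝ) (u v : Euc N → ℝ) : ℝ :=
  (cNs N s / 2) *
    ∫ p : Euc N × Euc N, (u p.1 - u p.2) * (v p.1 - v p.2) / ‖p.1 - p.2‖ ^ ((N : ℝ) + 2 * s)

/-- Squared Gagliardo seminorm [u]_s². -/
def gagSq (N : ℕ) (s : ℝ) (u : Euc N → ℝ) : ℝ := bilinE N s u u

/-- Membership in H^s(ℝ^N): u ∈ L² with finite Gagliardo seminorm. -/
def memHs (N : ℕ) (s : ℝ) (u : Euc N → ℝ) : Prop :=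
  MemLp u 2 volume ∧
    Integrable (fun p : Euc N × Euc N =>
      (u p.1 - u p.2) ^ 2 / ‖p.1 - p.2‖ ^ ((N : ℝ) + 2 * s))

/-- The L^p norm with real exponent p ≥ 1. -/
def LpNorm (N : ℕ) (p : ℝ) (u : Euc N → ℝ) : ℝ :=
  (eLpNorm u (ENNReal.ofReal p) volume).toReal

/-- The L^∞ norm (essential supremum of |u|). -/
def supNorm (N : ℕ) (u : Euc N → ℝ) : ℝ := (eLpNorm u ⊤ volume).toReal

/-- The squared norm ‖u‖_{s,V}² = [u]_s² + ∫ V u². -/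
def normSVSq (N : ℕ) (s : ℝ) (V : Euc N → ℝ) (u : Euc N → ℝ) : ℝ :=
  gagSq N s u + ∫ x, V x * u x ^ 2

/-- x · ∇V(x). -/
def xdotGrad (N : ℕ) (V : Euc N → ℝ) (x : Euc N) : ℝ := inner ℝ x (gradient V x)

/-- Condition (V1): V is C², bounded between a positive constant V₀ and
V_∞ = sup V = liminf_{|x|→∞} V(x). -/
def SatV1 (N : ℕ) (V : Euc N → ℝ) : Prop :=
  ContDiff ℝ 2 V ∧ (∃ V₀ > 0, ∀ x, V₀ ≤ V x) ∧ BddAbove (Set.range V) ∧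
    (⨆ x, V x) = Filter.liminf V (Filter.comap (fun x : Euc N => ‖x‖) Filter.atTop)

/-- Condition (V2): x ↦ x·∇V(x) is bounded. -/
def SatV2 (N : ℕ) (V : Euc N → ℝ) : Prop :=
  ∃ C, ∀ x, |xdotGrad N V x| ≤ C

/-- The constrained minimization level S^V_{2s*−ε}. -/
def SobolevSV (N : ℕ) (s : ℝ) (V : Euc N → ℝ) (ε : ℝ) : ℝ :=
  sInf { t : ℝ | ∃ u : Euc N → ℝ, memHs N s u ∧
    (∫ x, |u x| ^ (twoStar N s - ε)) = 1 ∧ t = normSVSq N s V u }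

/-- The fractional Sobolev constant S. -/
def SobolevS (N : ℕ) (s : ℝ) : ℝ :=
  sInf { t : ℝ | ∃ u : Euc N → ℝ, memHs N s u ∧ ¬ (∀ᵐ x ∂volume, u x = 0) ∧
    t = gagSq N s u / LpNorm N (twoStar N s) u ^ 2 }

/-- Weak solution of (−Δ)^s u + V u = u^{2s*−1−ε} in ℝ^N. -/
def IsWeakSol (N : ℕ) (s : ℝ) (V : Euc N → ℝ) (ε : ℝ) (u : Euc N → ℝ) : Prop :=
  ∀ φ : Euc N → ℝ, ContDiff ℝ (⊤ : ℕ∞) φ → HasCompactSupport φ →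
    bilinE N s u φ + ∫ x, V x * u x * φ x = ∫ x, u x ^ (twoStar N s - 1 - ε) * φ x

/-- A minimal ground state for parameter ε: a positive weak solution minimizing
the quotient ‖u‖_{s,V}² / ‖u‖_{2s*−ε}². -/
def IsMinGS (N : ℕ) (s : ℝ) (V : Euc N → ℝ) (ε : ℝ) (u : Euc N → ℝ) : Prop :=
  memHs N s u ∧ (∀ x, 0 < u x) ∧ IsWeakSol N s V ε u ∧
    normSVSq N s V u / LpNorm N (twoStar N s - ε) u ^ 2 =
      sInf { t : ℝ | ∃ w : Euc N → ℝ, memHs N s w ∧ ¬ (∀ᵐ x ∂volume, w x = 0) ∧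
        t = normSVSq N s V w / LpNorm N (twoStar N s - ε) w ^ 2 }

/-- u attains its supremum at x₀ : u(x₀) = ‖u‖_∞ and u ≤ u(x₀) everywhere. -/
def AttainsSupAt (N : ℕ) (u : Euc N → ℝ) (x₀ : Euc N) : Prop :=
  (∀ y, u y ≤ u x₀) ∧ u x₀ = supNorm N u

/-- The constant λ in the standard bubble. -/
def lamConst (N : ℕ) (s : ℝ) : ℝ :=
  2 * Real.sqrt (Real.Gamma ((N + 2 * s) / 2) / Real.Gamma ((N - 2 * s) / 2))

/-- The standard bubble U(x) = (1 + |x|²/λ²)^{(2s−N)/2}. -/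
def bubble (N : ℕ) (s : ℝ) (x : Euc N) : ℝ :=
  (1 + ‖x‖ ^ 2 / lamConst N s ^ 2) ^ ((2 * s - N) / 2)

/-- The constant A(N,s) = (2N/(N−2s))² S^{−N/(2s)} ∫ U². -/
def Ans (N : ℕ) (s : ℝ) : ℝ :=
  (2 * N / (N - 2 * s)) ^ 2 * SobolevS N s ^ (-(N : ℝ) / (2 * s)) *
    ∫ x : Euc N, bubble N s x ^ 2

/-- The rescaling parameter μ_ε = ‖u_ε‖_∞^{−(2s*−2−ε)/(2s)}. -/
def muOf (N : ℕ) (s ε : ℝ) (u : Euc N → ℝ) : ℝ :=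
  supNorm N u ^ (-(twoStar N s - 2 - ε) / (2 * s))

/-- The rescaled ground state v_ε(x) = μ_ε^{2s/(2s*−2−ε)} u_ε(x_ε + μ_ε x). -/
def vOf (N : ℕ) (s ε : ℝ) (u : Euc N → ℝ) (xε : Euc N) (x : Euc N) : ℝ :=
  muOf N s ε u ^ (2 * s / (twoStar N s - 2 - ε)) * u (xε + muOf N s ε u • x)


section Stmt11Aux

open MeasureTheory Filter

namespace Stmt11

variable {N : ℕ} {s : ℝ}

/-- The admissible set defining `SobolevSV`. -/
def Tset (N : ℕ) (s : ℝ) (V : Euc N → ℝ) (ε : ℝ) : Set ℝ :=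
  { t : ℝ | ∃ u : Euc N → ℝ, memHs N s u ∧
    (∫ x, |u x| ^ (twoStar N s - ε)) = 1 ∧ t = normSVSq N s V u }

lemma sobolevSV_eq (N : ℕ) (s : ℝ) (V : Euc N → ℝ) (ε : ℝ) :
    SobolevSV N s V ε = sInf (Tset N s V ε) := rfl

lemma cNs_pos (hs : 0 < s) (hs1 : s < 1) : 0 < cNs N s := by
  have h2 : 0 < Real.Gamma (((N : ℝ) + 2 * s) / 2) :=
    Real.Gamma_pos_of_pos (by positivity)
  have h4 : 0 < Real.Gamma (1 - s) := Real.Gamma_pos_of_pos (by linarith)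
  have h1 : (0:ℝ) < (4:ℝ) ^ s := Real.rpow_pos_of_pos (by norm_num) _
  have h3 : (0:ℝ) < Real.pi ^ ((N:ℝ)/2) := Real.rpow_pos_of_pos Real.pi_pos _
  exact div_pos (mul_pos (mul_pos h1 hs) h2) (mul_pos h3 h4)

lemma gagSq_eq (u : Euc N → ℝ) :
    gagSq N s u = (cNs N s / 2) *
      ∫ p : Euc N × Euc N, (u p.1 - u p.2) ^ 2 / ‖p.1 - p.2‖ ^ ((N : ℝ) + 2 * s) := by
  have : (fun p : Euc N × Euc N =>
      (u p.1 - u p.2) * (u p.1 - u p.2) / ‖p.1 - p.2‖ ^ ((N : ℝ) + 2 * s))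
      = fun p => (u p.1 - u p.2) ^ 2 / ‖p.1 - p.2‖ ^ ((N : ℝ) + 2 * s) := by
    funext p; rw [sq]
  rw [gagSq, bilinE, this]

lemma gagSq_nonneg (hs : 0 < s) (hs1 : s < 1) (u : Euc N → ℝ) : 0 ≤ gagSq N s u := by
  rw [gagSq_eq]
  refine mul_nonneg (by linarith [cNs_pos (N := N) hs hs1]) (integral_nonneg fun p => ?_)
  exact div_nonneg (sq_nonneg _) (Real.rpow_nonneg (norm_nonneg _) _)

lemma normSVSq_nonneg (hs : 0 < s) (hs1 : s < 1) {V : Euc N → ℝ}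
    (hV : ∀ x, 0 ≤ V x) (u : Euc N → ℝ) : 0 ≤ normSVSq N s V u :=
  add_nonneg (gagSq_nonneg hs hs1 u)
    (integral_nonneg fun x => mul_nonneg (hV x) (sq_nonneg _))

lemma Tset_subset (hs : 0 < s) (hs1 : s < 1) {V : Euc N → ℝ}
    (hV : ∀ x, 0 ≤ V x) (ε : ℝ) : Tset N s V ε ⊆ Set.Ici 0 := by
  rintro t ⟨u, hu, hc, rfl⟩
  exact normSVSq_nonneg hs hs1 hV u

lemma Tset_bddBelow (hs : 0 < s) (hs1 : s < 1) {V : Euc N → ℝ}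
    (hV : ∀ x, 0 ≤ V x) (ε : ℝ) : BddBelow (Tset N s V ε) :=
  ⟨0, fun _ ht => Tset_subset hs hs1 hV ε ht⟩

lemma sobolevSV_nonneg (hs : 0 < s) (hs1 : s < 1) {V : Euc N → ℝ}
    (hV : ∀ x, 0 ≤ V x) (ε : ℝ) : 0 ≤ SobolevSV N s V ε :=
  Real.sInf_nonneg fun _ ht => Tset_subset hs hs1 hV ε ht

/-! ### Scaling -/

lemma memHs_const_mul {u : Euc N → ℝ} (hu : memHs N s u) (c : ℝ) :
    memHs N s (fun x => c * u x) := by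
  refine ⟨hu.1.const_mul c, ?_⟩
  have heq : (fun p : Euc N × Euc N =>
      (c * u p.1 - c * u p.2) ^ 2 / ‖p.1 - p.2‖ ^ ((N : ℝ) + 2 * s))
      = fun p => c ^ 2 * ((u p.1 - u p.2) ^ 2 / ‖p.1 - p.2‖ ^ ((N : ℝ) + 2 * s)) := by
    funext p; rw [← mul_div_assoc]; congr 1; ring
  rw [show (fun x => c * u x) = fun x => c * u x from rfl]
  simpa [heq] using hu.2.const_mul (c ^ 2)

lemma normSVSq_const_mul {V : Euc N → ℝ} (u : Euc N → ℝ) (c : ℝ) :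
    normSVSq N s V (fun x => c * u x) = c ^ 2 * normSVSq N s V u := by
  have h1 : (fun p : Euc N × Euc N =>
      (c * u p.1 - c * u p.2) * (c * u p.1 - c * u p.2) / ‖p.1 - p.2‖ ^ ((N : ℝ) + 2 * s))
      = fun p => c ^ 2 *
        ((u p.1 - u p.2) * (u p.1 - u p.2) / ‖p.1 - p.2‖ ^ ((N : ℝ) + 2 * s)) := by
    funext p; rw [← mul_div_assoc]; congr 1; ring
  have h2 : (fun x => V x * (c * u x) ^ 2) = fun x => c ^ 2 * (V x * u x ^ 2) := by
    funext x; ring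
  simp only [normSVSq, gagSq, bilinE, h1, h2, integral_const_mul]
  ring

lemma integral_abs_rpow_const_mul {u : Euc N → ℝ} {c : ℝ} (hc : 0 < c) (q : ℝ) :
    ∫ x, |c * u x| ^ q = c ^ q * ∫ x, |u x| ^ q := by
  rw [← integral_const_mul]
  congr 1
  funext x
  rw [abs_mul, abs_of_pos hc, Real.mul_rpow hc.le (abs_nonneg _)]

lemma rpow_norm_aux {I q : ℝ} (hI : 0 < I) (hq : q ≠ 0) :
    (I ^ (-(1:ℝ)/q)) ^ q * I = 1 := by
  rw [← Real.rpow_mul hI.le]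
  have : (-(1:ℝ)/q) * q = -1 := by field_simp
  rw [this, Real.rpow_neg_one, inv_mul_cancel₀ hI.ne']

lemma sq_rpow_aux {I q : ℝ} (hI : 0 < I) :
    (I ^ (-(1:ℝ)/q)) ^ (2:ℕ) = I ^ (-(2:ℝ)/q) := by
  rw [← Real.rpow_natCast (I ^ (-(1:ℝ)/q)) 2, ← Real.rpow_mul hI.le]
  congr 1
  push_cast
  ring

lemma mem_Tset {V : Euc N → ℝ} {u : Euc N → ℝ} (hu : memHs N s u) {ε : ℝ}
    (hq : twoStar N s - ε ≠ 0) (hI : 0 < ∫ x, |u x| ^ (twoStar N s - ε)) :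
    (∫ x, |u x| ^ (twoStar N s - ε)) ^ (-(2:ℝ)/(twoStar N s - ε)) * normSVSq N s V u
      ∈ Tset N s V ε := by
  have hcpos : 0 < (∫ x, |u x| ^ (twoStar N s - ε)) ^ (-(1:ℝ)/(twoStar N s - ε)) :=
    Real.rpow_pos_of_pos hI _
  refine ⟨fun x =>
    (∫ x, |u x| ^ (twoStar N s - ε)) ^ (-(1:ℝ)/(twoStar N s - ε)) * u x,
    memHs_const_mul hu _, ?_, ?_⟩
  · rw [integral_abs_rpow_const_mul hcpos]
    exact rpow_norm_aux hI hq
  · rw [normSVSq_const_mul]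
    congr 1
    exact (sq_rpow_aux hI).symm

/-! ### Truncation -/

/-- Truncation of `|u|` at level `M`. -/
def trunc (u : Euc N → ℝ) (M : ℝ) (x : Euc N) : ℝ := min |u x| M

lemma trunc_nonneg {u : Euc N → ℝ} {M : ℝ} (hM : 0 ≤ M) (x : Euc N) :
    0 ≤ trunc u M x := le_min (abs_nonneg _) hM

lemma trunc_le_abs {u : Euc N → ℝ} {M : ℝ} (x : Euc N) : trunc u M x ≤ |u x| :=
  min_le_left _ _

lemma trunc_le {u : Euc N → ℝ} {M : ℝ} (x : Euc N) : trunc u M x ≤ M := min_le_right _ _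

lemma abs_trunc_sub_trunc_le {u : Euc N → ℝ} {M : ℝ} (x y : Euc N) :
    |trunc u M x - trunc u M y| ≤ |u x - u y| := by
  have h := abs_min_sub_min_le_max |u x| M |u y| M
  rw [sub_self, abs_zero, max_eq_left (abs_nonneg _)] at h
  exact h.trans (abs_abs_sub_abs_le_abs_sub _ _)

lemma sq_trunc_sub_le {u : Euc N → ℝ} {M : ℝ} (x y : Euc N) :
    (trunc u M x - trunc u M y) ^ 2 ≤ (u x - u y) ^ 2 := by
  calc (trunc u M x - trunc u M y) ^ 2 = |trunc u M x - trunc u M y| ^ 2 := (sq_abs _).symm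
    _ ≤ |u x - u y| ^ 2 := by
        exact pow_le_pow_left₀ (abs_nonneg _) (abs_trunc_sub_trunc_le x y) 2
    _ = (u x - u y) ^ 2 := sq_abs _

lemma sq_trunc_le {u : Euc N → ℝ} {M : ℝ} (hM : 0 ≤ M) (x : Euc N) :
    trunc u M x ^ 2 ≤ u x ^ 2 := by
  calc trunc u M x ^ 2 ≤ |u x| ^ 2 :=
        pow_le_pow_left₀ (trunc_nonneg hM x) (trunc_le_abs x) 2
    _ = u x ^ 2 := sq_abs _

lemma trunc_aemeasurable {u : Euc N → ℝ} (hu : AEMeasurable u volume) (M : ℝ) :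
    AEMeasurable (trunc u M) volume :=
  (continuous_abs.min continuous_const).measurable.comp_aemeasurable hu

lemma trunc_rpow_le {u : Euc N → ℝ} {M q B : ℝ} (hM : 1 ≤ M) (hq2 : 2 ≤ q) (hqB : q ≤ B)
    (x : Euc N) : trunc u M x ^ q ≤ M ^ B * u x ^ 2 := by
  have hM0 : (0:ℝ) < M := by linarith
  have h0 : 0 ≤ trunc u M x := trunc_nonneg hM0.le x
  rcases h0.eq_or_lt with h | h
  · rw [← h, Real.zero_rpow (by linarith : q ≠ 0)]
    positivity
  · have e1 : trunc u M x ^ q = trunc u M x ^ (q - 2) * trunc u M x ^ (2:ℝ) := by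
      rw [← Real.rpow_add h]; ring_nf
    rw [e1, Real.rpow_two]
    have h1 : trunc u M x ^ (q - 2) ≤ M ^ (q - 2) :=
      Real.rpow_le_rpow h0 (trunc_le x) (by linarith)
    have h2 : M ^ (q - 2) ≤ M ^ B :=
      Real.rpow_le_rpow_of_exponent_le hM (by linarith)
    exact mul_le_mul (h1.trans h2) (sq_trunc_le hM0.le x) (sq_nonneg _)
      (Real.rpow_nonneg hM0.le _)

lemma integrable_trunc_rpow {u : Euc N → ℝ} (hu2 : MemLp u 2 volume) {M q : ℝ}
    (hM : 1 ≤ M) (hq2 : 2 ≤ q) :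
    Integrable (fun x => trunc u M x ^ q) volume := by
  refine Integrable.mono' ((hu2.integrable_sq).const_mul (M ^ q)) ?_ ?_
  · exact ((trunc_aemeasurable hu2.aestronglyMeasurable.aemeasurable M).pow aemeasurable_const).aestronglyMeasurable
  · refine Filter.Eventually.of_forall fun x => ?_
    rw [Real.norm_eq_abs, abs_of_nonneg (Real.rpow_nonneg (trunc_nonneg (by linarith) x) _)]
    exact trunc_rpow_le hM hq2 le_rfl x

lemma gag_kernel_aemeasurable {u : Euc N → ℝ} (hu : AEMeasurable u volume) :
    AEStronglyMeasurable (fun p : Euc N × Euc N =>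
      (u p.1 - u p.2) ^ 2 / ‖p.1 - p.2‖ ^ ((N : ℝ) + 2 * s)) volume := by
  rw [MeasureTheory.Measure.volume_eq_prod]
  have h1 : AEMeasurable (fun p : Euc N × Euc N => u p.1)
      ((volume : Measure (Euc N)).prod volume) :=
    hu.comp_quasiMeasurePreserving MeasureTheory.Measure.quasiMeasurePreserving_fst
  have h2 : AEMeasurable (fun p : Euc N × Euc N => u p.2)
      ((volume : Measure (Euc N)).prod volume) :=
    hu.comp_quasiMeasurePreserving MeasureTheory.Measure.quasiMeasurePreserving_snd
  have hden : Measurable (fun p : Euc N × Euc N => ‖p.1 - p.2‖ ^ ((N : ℝ) + 2 * s)) :=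
    (measurable_fst.sub measurable_snd).norm.pow measurable_const
  exact (((h1.sub h2).pow aemeasurable_const).div hden.aemeasurable).aestronglyMeasurable

lemma div_le_div_nonneg_right {a b c : ℝ} (h : a ≤ b) (hc : 0 ≤ c) : a / c ≤ b / c := by
  rcases hc.eq_or_lt with h0 | h0
  · simp [← h0]
  · exact div_le_div_of_nonneg_right h h0.le

lemma memHs_trunc {u : Euc N → ℝ} (hu : memHs N s u) {M : ℝ} (hM : 0 ≤ M) :
    memHs N s (trunc u M) := by
  have ham := trunc_aemeasurable hu.1.aestronglyMeasurable.aemeasurable M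
  constructor
  · refine MemLp.of_le hu.1 ham.aestronglyMeasurable ?_
    refine Filter.Eventually.of_forall fun x => ?_
    rw [Real.norm_eq_abs, Real.norm_eq_abs, abs_of_nonneg (trunc_nonneg hM x)]
    exact trunc_le_abs x
  · refine Integrable.mono' hu.2 (gag_kernel_aemeasurable ham) ?_
    refine Filter.Eventually.of_forall fun p => ?_
    rw [Real.norm_eq_abs, abs_of_nonneg (div_nonneg (sq_nonneg _)
      (Real.rpow_nonneg (norm_nonneg _) _))]
    exact div_le_div_nonneg_right (sq_trunc_sub_le _ _) (Real.rpow_nonneg (norm_nonneg _) _)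

lemma integrable_V_mul_sq {V : Euc N → ℝ} {C : ℝ} (hVcont : Continuous V)
    (hVpos : ∀ x, 0 ≤ V x) (hVbd : ∀ x, V x ≤ C) {u : Euc N → ℝ} (hu2 : MemLp u 2 volume) :
    Integrable (fun x => V x * u x ^ 2) volume := by
  refine Integrable.mono' ((hu2.integrable_sq).const_mul C) ?_ ?_
  · exact (hVcont.aemeasurable.mul
      (hu2.aestronglyMeasurable.aemeasurable.pow aemeasurable_const)).aestronglyMeasurable
  · refine Filter.Eventually.of_forall fun x => ?_
    rw [Real.norm_eq_abs, abs_of_nonneg (mul_nonneg (hVpos x) (sq_nonneg _))]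
    exact mul_le_mul_of_nonneg_right (hVbd x) (sq_nonneg _)

lemma normSVSq_trunc_le (hs : 0 < s) (hs1 : s < 1) {V : Euc N → ℝ} {C : ℝ}
    (hVcont : Continuous V) (hVpos : ∀ x, 0 ≤ V x) (hVbd : ∀ x, V x ≤ C)
    {u : Euc N → ℝ} (hu : memHs N s u) {M : ℝ} (hM : 0 ≤ M) :
    normSVSq N s V (trunc u M) ≤ normSVSq N s V u := by
  have ht := memHs_trunc hu hM
  have hVu := integrable_V_mul_sq hVcont hVpos hVbd hu.1
  have hVt := integrable_V_mul_sq hVcont hVpos hVbd ht.1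
  unfold normSVSq
  refine add_le_add ?_ ?_
  · rw [gagSq_eq, gagSq_eq]
    refine mul_le_mul_of_nonneg_left ?_ (by linarith [cNs_pos (N := N) hs hs1])
    refine integral_mono ht.2 hu.2 fun p => ?_
    exact div_le_div_nonneg_right (sq_trunc_sub_le _ _) (Real.rpow_nonneg (norm_nonneg _) _)
  · refine integral_mono hVt hVu fun x => ?_
    exact mul_le_mul_of_nonneg_left (sq_trunc_le hM x) (hVpos x)

lemma tendsto_trunc_integral {u : Euc N → ℝ} (hu2 : MemLp u 2 volume) {p : ℝ}
    (hp : 0 ≤ p) (hup : Integrable (fun x => |u x| ^ p) volume) :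
    Filter.Tendsto (fun m : ℕ => ∫ x, trunc u ((m:ℝ)+1) x ^ p) Filter.atTop
      (nhds (∫ x, |u x| ^ p)) := by
  refine tendsto_integral_of_dominated_convergence (fun x => |u x| ^ p)
    (fun m => ((trunc_aemeasurable hu2.aestronglyMeasurable.aemeasurable _).pow
      aemeasurable_const).aestronglyMeasurable) hup (fun m => ?_) ?_
  · refine Filter.Eventually.of_forall fun x => ?_
    rw [Real.norm_eq_abs, abs_of_nonneg
      (Real.rpow_nonneg (trunc_nonneg (by positivity) x) _)]
    exact Real.rpow_le_rpow (trunc_nonneg (by positivity) x) (trunc_le_abs x) hp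
  · refine Filter.Eventually.of_forall fun x => ?_
    refine tendsto_atTop_of_eventually_const (i₀ := ⌈|u x|⌉₊) fun m hm => ?_
    have : |u x| ≤ (m:ℝ) + 1 := by
      calc |u x| ≤ (⌈|u x|⌉₊ : ℝ) := Nat.le_ceil _
        _ ≤ (m:ℝ) := by exact_mod_cast hm
        _ ≤ (m:ℝ) + 1 := by linarith
    rw [trunc, min_eq_left this]

lemma continuousAt_trunc_integral {u : Euc N → ℝ} (hu2 : MemLp u 2 volume) {M q₀ : ℝ}
    (hM : 1 ≤ M) (hq₀ : 2 < q₀) :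
    ContinuousAt (fun q : ℝ => ∫ x, trunc u M x ^ q) q₀ := by
  refine continuousAt_of_dominated (bound := fun x => M ^ (q₀ + 1) * u x ^ 2)
    (Filter.Eventually.of_forall fun q =>
      ((trunc_aemeasurable hu2.aestronglyMeasurable.aemeasurable _).pow
        aemeasurable_const).aestronglyMeasurable) ?_
    ((hu2.integrable_sq).const_mul _) ?_
  · have hev : ∀ᶠ q in nhds q₀, q ∈ Set.Ioo (2:ℝ) (q₀ + 1) :=
      isOpen_Ioo.eventually_mem ⟨hq₀, by linarith⟩
    filter_upwards [hev] with q hq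
    refine Filter.Eventually.of_forall fun x => ?_
    rw [Real.norm_eq_abs, abs_of_nonneg (Real.rpow_nonneg (trunc_nonneg (by linarith) x) _)]
    exact trunc_rpow_le hM hq.1.le hq.2.le x
  · refine Filter.Eventually.of_forall fun x => ?_
    have h := Real.continuousAt_rpow (trunc u M x, q₀) (Or.inr (by simp; linarith))
    exact h.comp (Continuous.continuousAt (continuous_const.prodMk continuous_id))

lemma trunc_integral_pos {u : Euc N → ℝ} (hu2 : MemLp u 2 volume)
    (hne : ¬ (u =ᵐ[volume] 0)) {M q : ℝ} (hM : 1 ≤ M) (hq2 : 2 ≤ q) :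
    0 < ∫ x, trunc u M x ^ q := by
  rw [integral_pos_iff_support_of_nonneg_ae
    (Filter.Eventually.of_forall fun x => Real.rpow_nonneg (trunc_nonneg (by linarith) x) _)
    (integrable_trunc_rpow hu2 hM hq2)]
  have hsub : {x | u x ≠ 0} ⊆ Function.support (fun x => trunc u M x ^ q) := by
    intro x hx
    have h1 : 0 < |u x| := abs_pos.2 hx
    have h2 : 0 < trunc u M x := lt_min h1 (by linarith)
    exact (Real.rpow_pos_of_pos h2 q).ne'
  have h0 : 0 < volume {x | u x ≠ 0} := by
    rw [pos_iff_ne_zero]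
    intro h
    exact hne (by simpa [Filter.EventuallyEq, ae_iff] using h)
  exact h0.trans_le (measure_mono hsub)

end Stmt11

end Stmt11Aux


theorem stmt11 (N : ℕ) (s : ℝ) (hs : 0 < s) (hs1 : s < 1) (hN : 2 * s < (N : ℝ))
    (V : Euc N → ℝ) (hV1 : SatV1 N V)
    (ε₀ : ℝ) (hε₀ : ε₀ ∈ Set.Ioo (0 : ℝ) (twoStar N s - 2)) :
    Filter.limsup (fun ε => SobolevSV N s V ε) (nhdsWithin ε₀ {ε₀}ᶜ) ≤
      SobolevSV N s V ε₀ := by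
  classical
  obtain ⟨hVC2, hVlb, hVub, -⟩ := hV1
  obtain ⟨V₀, hV₀pos, hV₀⟩ := hVlb
  obtain ⟨C, hCub⟩ := hVub
  have hVbd : ∀ x, V x ≤ C := fun x => hCub (Set.mem_range_self x)
  have hVpos : ∀ x, 0 ≤ V x := fun x => le_trans hV₀pos.le (hV₀ x)
  have hVcont : Continuous V := hVC2.continuous
  obtain ⟨hε₀pos, hε₀lt⟩ := hε₀
  have hp₀2 : 2 < twoStar N s - ε₀ := by linarith
  have hfge : ∀ ε, 0 ≤ SobolevSV N s V ε := fun ε =>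
    Stmt11.sobolevSV_nonneg hs hs1 hVpos ε
  have hql : Filter.Tendsto (fun ε : ℝ => twoStar N s - ε) (nhdsWithin ε₀ {ε₀}ᶜ)
      (nhds (twoStar N s - ε₀)) :=
    ((continuous_const.sub continuous_id).tendsto ε₀).mono_left nhdsWithin_le_nhds
  have hev2 : ∀ᶠ ε in nhdsWithin ε₀ {ε₀}ᶜ,
      twoStar N s - ε ∈ Set.Ioo (2:ℝ) (twoStar N s - ε₀ + 1) :=
    hql.eventually (isOpen_Ioo.eventually_mem ⟨hp₀2, by linarith⟩)
  rcases Set.eq_empty_or_nonempty (Stmt11.Tset N s V ε₀) with hT | hT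
  · -- the admissible set at ε₀ is empty : then all nearby sets are empty as well
    have hRHS : SobolevSV N s V ε₀ = 0 := by
      rw [Stmt11.sobolevSV_eq, hT, Real.sInf_empty]
    have hev0 : ∀ᶠ ε in nhdsWithin ε₀ {ε₀}ᶜ, SobolevSV N s V ε ≤ 0 := by
      filter_upwards [hev2] with ε hq
      have hTe : Stmt11.Tset N s V ε = ∅ := by
        rw [Set.eq_empty_iff_forall_notMem]
        rintro t ⟨u, hu, hcon, -⟩
        have hne : ¬ (u =ᵐ[volume] (0 : Euc N → ℝ)) := by
          intro h0
          have hz : (fun x => |u x| ^ (twoStar N s - ε))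
              =ᵐ[volume] (fun _ => (0:ℝ)) := by
            have hqne : twoStar N s - ε ≠ 0 :=
              ne_of_gt (by linarith [hq.1] : (0:ℝ) < twoStar N s - ε)
            filter_upwards [h0] with x hx
            simp only [Pi.zero_apply] at hx
            simp [hx, Real.zero_rpow hqne]
          rw [integral_congr_ae hz, integral_zero] at hcon
          norm_num at hcon
        have hI := Stmt11.trunc_integral_pos (q := twoStar N s - ε₀) hu.1 hne le_rfl
          (le_of_lt hp₀2)
        have habs : (fun x => |Stmt11.trunc u 1 x| ^ (twoStar N s - ε₀))
            = fun x => Stmt11.trunc u 1 x ^ (twoStar N s - ε₀) :=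
          funext fun x => by rw [abs_of_nonneg (Stmt11.trunc_nonneg one_pos.le x)]
        have hmem := Stmt11.mem_Tset (V := V) (Stmt11.memHs_trunc hu one_pos.le)
          (by linarith : twoStar N s - ε₀ ≠ 0) (by rw [habs]; exact hI)
        rw [hT] at hmem
        exact Set.notMem_empty _ hmem
      rw [Stmt11.sobolevSV_eq, hTe, Real.sInf_empty]
    rw [hRHS]
    exact Filter.limsup_le_of_le
      (Filter.isCoboundedUnder_le_of_le _ fun ε => hfge ε) hev0
  · -- main case
    refine le_of_forall_gt_imp_ge_of_dense fun a ha => ?_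
    rw [Stmt11.sobolevSV_eq] at ha
    obtain ⟨t, htT, hta⟩ := exists_lt_of_csInf_lt hT ha
    obtain ⟨u, hu, hcon, htval⟩ := htT
    have ht0 : 0 ≤ t := Stmt11.Tset_subset hs hs1 hVpos ε₀ ⟨u, hu, hcon, htval⟩
    have ha0 : 0 < a := lt_of_le_of_lt ht0 hta
    set θ : ℝ := (t / a + 1) / 2 with hθdef
    have hta1 : t / a < 1 := (div_lt_one ha0).2 hta
    have hθpos : 0 < θ := by
      have : 0 ≤ t / a := div_nonneg ht0 ha0.le
      rw [hθdef]; linarith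
    have hθlt : θ < 1 := by rw [hθdef]; linarith
    have htaθ : t ≤ a * θ := by
      have h1 : a * θ = (t + a) / 2 := by rw [hθdef]; field_simp
      rw [h1]; linarith
    have hint : Integrable (fun x => |u x| ^ (twoStar N s - ε₀)) volume := by
      by_contra h
      rw [integral_undef h] at hcon
      norm_num at hcon
    have hconv := Stmt11.tendsto_trunc_integral hu.1
      (by linarith : (0:ℝ) ≤ twoStar N s - ε₀) hint
    rw [hcon] at hconv
    obtain ⟨m, hm⟩ :=
      (hconv.eventually (eventually_gt_nhds (by linarith : (θ+1)/2 < 1))).exists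
    have hM1 : (1:ℝ) ≤ (m:ℝ) + 1 := by
      have : (0:ℝ) ≤ (m:ℝ) := Nat.cast_nonneg m
      linarith
    have hcontI := Stmt11.continuousAt_trunc_integral hu.1 hM1 hp₀2
    have hevI : ∀ᶠ q in nhds (twoStar N s - ε₀),
        θ < ∫ x, Stmt11.trunc u ((m:ℝ)+1) x ^ q :=
      hcontI.eventually (eventually_gt_nhds (by linarith))
    have hevε : ∀ᶠ ε in nhdsWithin ε₀ {ε₀}ᶜ,
        θ < ∫ x, Stmt11.trunc u ((m:ℝ)+1) x ^ (twoStar N s - ε) :=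
      hql.eventually hevI
    refine Filter.limsup_le_of_le
      (Filter.isCoboundedUnder_le_of_le _ fun ε => hfge ε) ?_
    filter_upwards [hev2, hevε] with ε hq hI
    have hq2 : (2:ℝ) < twoStar N s - ε := hq.1
    have htr := Stmt11.memHs_trunc hu (le_trans zero_le_one hM1)
    have hIpos : 0 < ∫ x, Stmt11.trunc u ((m:ℝ)+1) x ^ (twoStar N s - ε) :=
      lt_trans hθpos hI
    have habs : (fun x => |Stmt11.trunc u ((m:ℝ)+1) x| ^ (twoStar N s - ε))
        = fun x => Stmt11.trunc u ((m:ℝ)+1) x ^ (twoStar N s - ε) :=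
      funext fun x => by
        rw [abs_of_nonneg (Stmt11.trunc_nonneg (le_trans zero_le_one hM1) x)]
    have hmem := Stmt11.mem_Tset (V := V) htr
      (by linarith : twoStar N s - ε ≠ 0) (by rw [habs]; exact hIpos)
    have hle := csInf_le (Stmt11.Tset_bddBelow hs hs1 hVpos ε) hmem
    rw [← Stmt11.sobolevSV_eq] at hle
    refine hle.trans ?_
    rw [habs]
    -- bound the element
    have h1 : normSVSq N s V (Stmt11.trunc u ((m:ℝ)+1)) ≤ t := by
      rw [htval]
      exact Stmt11.normSVSq_trunc_le hs hs1 hVcont hVpos hVbd hu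
        (le_trans zero_le_one hM1)
    have hnn : 0 ≤ normSVSq N s V (Stmt11.trunc u ((m:ℝ)+1)) :=
      Stmt11.normSVSq_nonneg hs hs1 hVpos _
    have h2 : (∫ x, Stmt11.trunc u ((m:ℝ)+1) x ^ (twoStar N s - ε))
        ^ (-(2:ℝ)/(twoStar N s - ε)) ≤ θ⁻¹ := by
      have hq0 : (0:ℝ) < twoStar N s - ε := by linarith
      have hθle : θ ≤ (∫ x, Stmt11.trunc u ((m:ℝ)+1) x ^ (twoStar N s - ε))
          ^ ((2:ℝ)/(twoStar N s - ε)) := by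
        rcases le_or_gt 1 (∫ x, Stmt11.trunc u ((m:ℝ)+1) x ^ (twoStar N s - ε)) with h | h
        · exact le_trans hθlt.le (Real.one_le_rpow h (by positivity))
        · have h21 : (2:ℝ)/(twoStar N s - ε) ≤ 1 := by
            rw [div_le_one hq0]; linarith
          have := Real.rpow_le_rpow_of_exponent_ge hIpos h.le h21
          rw [Real.rpow_one] at this
          exact le_trans hI.le this
      have := inv_anti₀ hθpos hθle
      calc (∫ x, Stmt11.trunc u ((m:ℝ)+1) x ^ (twoStar N s - ε))
            ^ (-(2:ℝ)/(twoStar N s - ε))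
          = ((∫ x, Stmt11.trunc u ((m:ℝ)+1) x ^ (twoStar N s - ε))
            ^ ((2:ℝ)/(twoStar N s - ε)))⁻¹ := by
            rw [neg_div, Real.rpow_neg hIpos.le]
        _ ≤ θ⁻¹ := this
    calc (∫ x, Stmt11.trunc u ((m:ℝ)+1) x ^ (twoStar N s - ε))
          ^ (-(2:ℝ)/(twoStar N s - ε)) * normSVSq N s V (Stmt11.trunc u ((m:ℝ)+1))
        ≤ θ⁻¹ * t := by
          refine mul_le_mul h2 h1 hnn (inv_nonneg.2 hθpos.le)
      _ ≤ a := by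
          rw [inv_mul_le_iff₀ hθpos]
          linarith [htaθ]
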